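/- Let $k$ be a subfield of $\mathbb{C}$, $f \in k[t]$ an irreducible polynomial of degree $d$, and $g \in k[t]$ with $\deg g < d$. If $g(\alpha) \in \mathbb{Q}$ for every complex root $\alpha$ of $f$, then $g$ is a constant polynomial (and this constant lies in $\mathbb{Q}$). -/
import Mathlib


theorem stmt_1 (k : Subfield ℂ) (f g : Polynomial k)
    (hf : Irreducible f) (d : ℕ) (hd : f.natDegree = d) (hd1 : 1 ≤ d)
    (hg : g.natDegree < d)
    (hroots : ∀ α : ℂ, Polynomial.aeval α f = 0 → ∃ q : ℚ, Polynomial.aeval α g = (q : ℂ)) :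
    ∃ q : ℚ, g = Polynomial.C ((q : k)) := by
  have hf0 : f ≠ 0 := hf.ne_zero
  have hdeg : 0 < (f.map (algebraMap k ℂ)).degree := by
    rw [Polynomial.degree_map]
    exact Polynomial.natDegree_pos_iff_degree_pos.mp (by omega)
  obtain ⟨α, hα⟩ := Complex.exists_root hdeg
  rw [Polynomial.IsRoot, Polynomial.eval_map, ← Polynomial.aeval_def] at hα
  obtain ⟨q, hq⟩ := hroots α hα
  refine ⟨q, ?_⟩
  set p : Polynomial k := g - Polynomial.C ((q : k)) with hp
  have hcast : ((q : k) : ℂ) = (q : ℂ) := by push_cast; rfl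
  have hpα : Polynomial.aeval α p = 0 := by
    rw [hp, map_sub, Polynomial.aeval_C]
    show Polynomial.aeval α g - ((q : k) : ℂ) = 0
    rw [hcast, hq, sub_self]
  have hint : IsIntegral k α := (IsAlgebraic.isIntegral ⟨f, hf0, hα⟩)
  have hdvd : minpoly k α ∣ f := minpoly.dvd k α hα
  obtain ⟨c, hc⟩ := id hdvd
  have hassoc : Associated (minpoly k α) f := by
    rcases hf.isUnit_or_isUnit hc with h | h
    · exact absurd h (minpoly.not_isUnit k α)
    · exact ⟨h.unit, by rw [hc]; rfl⟩
  have hmd : (minpoly k α).natDegree = d := le_antisymm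
    (hd ▸ Polynomial.natDegree_le_of_dvd hdvd hf0)
    (hd ▸ Polynomial.natDegree_le_of_dvd hassoc.symm.dvd (minpoly.ne_zero hint))
  have hpdvd : minpoly k α ∣ p := minpoly.dvd k α hpα
  have hp0 : p = 0 := by
    by_contra h0
    have h1 := Polynomial.natDegree_le_of_dvd hpdvd h0
    have hpdeg : p.natDegree < d :=
      lt_of_le_of_lt (le_trans (Polynomial.natDegree_sub_le _ _) (by simp)) hg
    omega
  exact sub_eq_zero.mp hp0
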